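/- Let k : I × I → ℂ be a positive definite kernel with sup_{i} |k(i,i)| ≤ 1 on a countable index set I, and let T = (T_{ij}) be a bounded operator on ℓ²(I) ⊗ H given by a matrix of operators. Then the Schur multiplier M_k(T) with entries (M_k(T))_{ij} = k(i,j)T_{ij} satisfies ‖M_k(T)‖ ≤ ‖T‖. -/

import Mathlib

/-!
On a finite set of indices the kernel is a Gram matrix, `k i j = ⟪x i, x j⟫` with `‖x i‖ ≤ 1`.
Let `v` be a finite truncation of `M_k(T) ξ` and write `x i l` for the coordinates of `x i`.
The vectors `ζ_l = (x j l • ξ j)_j` and `η_l = (x i l • v i)_i` satisfy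
`∑_l ⟪η_l, T ζ_l⟫ = ‖v‖²`, `∑_l ‖ζ_l‖² ≤ ‖ξ‖²` and `∑_l ‖η_l‖² ≤ ‖v‖²`, so Cauchy–Schwarz gives
`‖v‖² ≤ ‖T‖ ‖v‖ ‖ξ‖`. Letting the truncations grow bounds `‖M_k(T) ξ‖` by `‖T‖ ‖ξ‖`.
-/

open scoped ComplexOrder ENNReal

/-- A kernel `k : I × I → ℂ` is positive definite if every finite matrix `(k(iₐ, i_b))` is
positive semidefinite. -/
def IsPosDefKernel {I : Type*} (k : I → I → ℂ) : Prop :=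
  ∀ (n : ℕ) (g : Fin n → I) (c : Fin n → ℂ),
    0 ≤ ∑ i, ∑ j, (starRingEnd ℂ) (c i) * c j * k (g i) (g j)

open Matrix

theorem Matrix.posSemidef_of_forall_dotProduct_mulVec_nonneg {n : Type*} [Fintype n]
    [DecidableEq n] {M : Matrix n n ℂ} (h : ∀ x, 0 ≤ star x ⬝ᵥ (M *ᵥ x)) : M.PosSemidef := by
  have hinner (x : EuclideanSpace ℂ n) : 0 ≤ inner ℂ (toEuclideanLin M x) x := by
    have : inner ℂ (toEuclideanLin M x) x = star (star x.ofLp ⬝ᵥ (M *ᵥ x.ofLp)) := by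
      rw [star_dotProduct, star_star, dotProduct_comm]; rfl
    exact this ▸ star_nonneg_iff.2 (h _)
  rw [← isPositive_toEuclideanLin_iff, LinearMap.isPositive_iff,
    LinearMap.isSymmetric_iff_inner_map_self_real]
  exact ⟨fun x => (hinner x).isSelfAdjoint, hinner⟩

namespace IsPosDefKernel

variable {I : Type*} {k : I → I → ℂ}

theorem posSemidef_of_fin (hk : IsPosDefKernel k) {n : ℕ} (g : Fin n → I) :
    (Matrix.of fun a b => k (g a) (g b)).PosSemidef := by
  refine posSemidef_of_forall_dotProduct_mulVec_nonneg fun c => ?_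
  convert hk n g c using 1
  simp only [dotProduct, mulVec, Finset.mul_sum, Pi.star_apply, of_apply, starRingEnd_apply]
  exact Finset.sum_congr rfl fun _ _ => Finset.sum_congr rfl fun _ _ => by ring

theorem posSemidef {n : Type*} [Fintype n] (hk : IsPosDefKernel k) (g : n → I) :
    (Matrix.of fun a b => k (g a) (g b)).PosSemidef := by
  let e := Fintype.equivFin n
  convert (hk.posSemidef_of_fin (g ∘ e.symm)).submatrix e using 1
  ext a b
  simp

theorem exists_gram (hk : IsPosDefKernel k) (E : Finset I) :
    ∃ (m : ℕ) (x : I → EuclideanSpace ℂ (Fin m)),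
      ∀ i ∈ E, ∀ j ∈ E, k i j = inner ℂ (x i) (x j) := by
  classical
  obtain ⟨m, v, hv⟩ :=
    posSemidef_iff_eq_sum_vecMulVec.1 (hk.posSemidef (Subtype.val : E → I))
  refine ⟨m, fun i => WithLp.toLp 2 fun l => if h : i ∈ E then star (v l ⟨i, h⟩) else 0,
    fun i hi j hj => ?_⟩
  have := congrFun (congrFun hv ⟨i, hi⟩) ⟨j, hj⟩
  simp only [of_apply, Matrix.sum_apply, vecMulVec_apply] at this
  simp [PiLp.inner_apply, hi, hj, this, mul_comm]

end IsPosDefKernel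

namespace lp

variable {α : Type*} {E : α → Type*} [∀ i, NormedAddCommGroup (E i)]

theorem sum_norm_sq_le_norm_sq (f : lp E 2) (s : Finset α) :
    ∑ i ∈ s, ‖f i‖ ^ 2 ≤ ‖f‖ ^ 2 := by
  simpa using lp.sum_rpow_le_norm_rpow (by simp) f s

theorem norm_le_of_forall_sum_norm_sq_le {f : lp E 2} {C : ℝ} (hC : 0 ≤ C)
    (hf : ∀ s : Finset α, ∑ i ∈ s, ‖f i‖ ^ 2 ≤ C ^ 2) : ‖f‖ ≤ C :=
  lp.norm_le_of_forall_sum_le (by simp) hC (by simpa using hf)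

theorem norm_sum_single_sq [DecidableEq α] (f : ∀ i, E i) (s : Finset α) :
    ‖∑ i ∈ s, lp.single 2 i (f i)‖ ^ 2 = ∑ i ∈ s, ‖f i‖ ^ 2 := by
  simpa using lp.norm_sum_single (p := 2) (by simp) f s

theorem sum_single_apply [DecidableEq α] (f : ∀ i, E i) (s : Finset α) (j : α) :
    (∑ i ∈ s, lp.single 2 i (f i) : lp E 2) j = if j ∈ s then f j else 0 := by
  simp only [lp.coeFn_sum, Finset.sum_apply, lp.coeFn_single, Finset.sum_pi_single]

end lp

theorem le_sq_of_le_mul_sqrt {a c : ℝ} (ha : 0 ≤ a) (h : a ≤ c * √a) : a ≤ c ^ 2 := by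
  nlinarith [Real.sq_sqrt ha, Real.sqrt_nonneg a]


section OperatorMatrix

variable {𝕜 α β H K : Type*} [RCLike 𝕜] [NormedAddCommGroup H] [InnerProductSpace 𝕜 H]
  [NormedAddCommGroup K] [InnerProductSpace 𝕜 K]

theorem apply_sum_single_eq_sum [DecidableEq α] {Tmat : β → α → H →L[𝕜] K}
    {T : lp (fun _ : α => H) 2 →L[𝕜] lp (fun _ : β => K) 2}
    (hT : ∀ ξ i, (T ξ : ∀ _ : β, K) i = ∑' j, Tmat i j (ξ j)) (u : α → H) (s : Finset α)
    (i : β) : (T (∑ j ∈ s, lp.single 2 j (u j)) : ∀ _ : β, K) i = ∑ j ∈ s, Tmat i j (u j) := by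
  rw [hT, tsum_eq_sum (s := s) fun j hj => by rw [lp.sum_single_apply, if_neg hj, map_zero]]
  exact Finset.sum_congr rfl fun j hj => by rw [lp.sum_single_apply, if_pos hj]

theorem inner_sum_single_apply_sum_single [DecidableEq α] [DecidableEq β]
    {Tmat : β → α → H →L[𝕜] K} {T : lp (fun _ : α => H) 2 →L[𝕜] lp (fun _ : β => K) 2}
    (hT : ∀ ξ i, (T ξ : ∀ _ : β, K) i = ∑' j, Tmat i j (ξ j))
    (w : β → K) (t : Finset β) (u : α → H) (s : Finset α) :
    inner 𝕜 (∑ i ∈ t, lp.single 2 i (w i)) (T (∑ j ∈ s, lp.single 2 j (u j))) =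
      ∑ i ∈ t, ∑ j ∈ s, inner 𝕜 (w i) (Tmat i j (u j)) := by
  simp only [sum_inner, lp.inner_single_left, apply_sum_single_eq_sum hT, inner_sum]

theorem norm_sum_inner_apply_le {ι : Type*} (T : H →L[𝕜] K) (η : ι → K) (ξ : ι → H)
    (s : Finset ι) :
    ‖∑ l ∈ s, inner 𝕜 (η l) (T (ξ l))‖ ≤
      ‖T‖ * (√(∑ l ∈ s, ‖η l‖ ^ 2) * √(∑ l ∈ s, ‖ξ l‖ ^ 2)) :=
  calc ‖∑ l ∈ s, inner 𝕜 (η l) (T (ξ l))‖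
      ≤ ∑ l ∈ s, ‖T‖ * (‖η l‖ * ‖ξ l‖) := by
        refine (norm_sum_le _ _).trans (Finset.sum_le_sum fun l _ => ?_)
        calc ‖inner 𝕜 (η l) (T (ξ l))‖ ≤ ‖η l‖ * (‖T‖ * ‖ξ l‖) :=
              (norm_inner_le_norm _ _).trans (by gcongr; exact T.le_opNorm _)
          _ = ‖T‖ * (‖η l‖ * ‖ξ l‖) := by ring
    _ ≤ ‖T‖ * (√(∑ l ∈ s, ‖η l‖ ^ 2) * √(∑ l ∈ s, ‖ξ l‖ ^ 2)) := by
        rw [← Finset.mul_sum]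
        gcongr
        exact Real.sum_mul_le_sqrt_mul_sqrt _ _ _

theorem sum_norm_sq_sum_single_smul_le {L : Type*} [Fintype L] [DecidableEq α]
    (x : α → EuclideanSpace 𝕜 L) (u : α → H) (s : Finset α) (hx : ∀ j ∈ s, ‖x j‖ ≤ 1) :
    ∑ l, ‖∑ j ∈ s, lp.single 2 j (x j l • u j)‖ ^ 2 ≤ ∑ j ∈ s, ‖u j‖ ^ 2 :=
  calc ∑ l, ‖∑ j ∈ s, lp.single 2 j (x j l • u j)‖ ^ 2
      = ∑ j ∈ s, ‖x j‖ ^ 2 * ‖u j‖ ^ 2 := by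
        simp_rw [lp.norm_sum_single_sq, norm_smul, mul_pow, EuclideanSpace.norm_sq_eq,
          Finset.sum_mul]
        exact Finset.sum_comm
    _ ≤ ∑ j ∈ s, ‖u j‖ ^ 2 := Finset.sum_le_sum fun j hj =>
        mul_le_of_le_one_left (sq_nonneg _) (pow_le_one₀ (norm_nonneg _) (hx j hj))

theorem sum_norm_sq_sum_inner_smul_le {L : Type*} [Fintype L] [DecidableEq α] [DecidableEq β]
    {Tmat : β → α → H →L[𝕜] K} {T : lp (fun _ : α => H) 2 →L[𝕜] lp (fun _ : β => K) 2}
    (hT : ∀ ξ i, (T ξ : ∀ _ : β, K) i = ∑' j, Tmat i j (ξ j))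
    (x : β → EuclideanSpace 𝕜 L) (y : α → EuclideanSpace 𝕜 L) (t : Finset β) (s : Finset α)
    (hx : ∀ i ∈ t, ‖x i‖ ≤ 1) (hy : ∀ j ∈ s, ‖y j‖ ≤ 1) (ξ : lp (fun _ : α => H) 2) :
    ∑ i ∈ t, ‖∑ j ∈ s, inner 𝕜 (x i) (y j) • Tmat i j (ξ j)‖ ^ 2 ≤ (‖T‖ * ‖ξ‖) ^ 2 := by
  set v : β → K := fun i => ∑ j ∈ s, inner 𝕜 (x i) (y j) • Tmat i j (ξ j)
  set A := ∑ i ∈ t, ‖v i‖ ^ 2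
  let η : L → lp (fun _ : β => K) 2 := fun l => ∑ i ∈ t, lp.single 2 i (x i l • v i)
  let ζ : L → lp (fun _ : α => H) 2 := fun l => ∑ j ∈ s, lp.single 2 j (y j l • ξ j)
  have hη : ∑ l, ‖η l‖ ^ 2 ≤ A := sum_norm_sq_sum_single_smul_le x v t hx
  have hζ : ∑ l, ‖ζ l‖ ^ 2 ≤ ‖ξ‖ ^ 2 :=
    (sum_norm_sq_sum_single_smul_le y ξ s hy).trans (lp.sum_norm_sq_le_norm_sq ξ s)
  have hA : ∑ l, inner 𝕜 (η l) (T (ζ l)) = (A : 𝕜) := by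
    have hv (i : β) (w : K) : inner 𝕜 w (v i) =
        ∑ l, ∑ j ∈ s, inner 𝕜 (x i l • w) (Tmat i j (y j l • ξ j)) := by
      simp only [v, inner_sum, inner_smul_left, inner_smul_right, map_smul, PiLp.inner_apply,
        RCLike.inner_apply, Finset.sum_mul]
      rw [Finset.sum_comm]
      exact Finset.sum_congr rfl fun j _ => Finset.sum_congr rfl fun l _ => by ring
    simp only [η, ζ, inner_sum_single_apply_sum_single hT, A]
    push_cast
    rw [Finset.sum_comm]
    exact Finset.sum_congr rfl fun i _ => by rw [← hv, inner_self_eq_norm_sq_to_K]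
  have hA_le : A ≤ ‖T‖ * (√A * ‖ξ‖) :=
    calc A = ‖∑ l, inner 𝕜 (η l) (T (ζ l))‖ := by
          rw [hA, RCLike.norm_ofReal, abs_of_nonneg (by positivity)]
      _ ≤ ‖T‖ * (√(∑ l, ‖η l‖ ^ 2) * √(∑ l, ‖ζ l‖ ^ 2)) := norm_sum_inner_apply_le T η ζ _
      _ ≤ ‖T‖ * (√A * ‖ξ‖) := mul_le_mul_of_nonneg_left (mul_le_mul (Real.sqrt_le_sqrt hη)
          ((Real.sqrt_le_sqrt hζ).trans_eq (Real.sqrt_sq (norm_nonneg _))) (Real.sqrt_nonneg _)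
          (Real.sqrt_nonneg _)) (norm_nonneg _)
  exact le_sq_of_le_mul_sqrt (by positivity) (by linarith)

end OperatorMatrix

theorem sum_norm_sq_tsum_le_of_forall_finset {α β E : Type*} [NormedAddCommGroup E]
    {f : α → β → E} {C : ℝ}
    (h : ∀ (t : Finset α) (s : Finset β), ∑ i ∈ t, ‖∑ j ∈ s, f i j‖ ^ 2 ≤ C) (t : Finset α) :
    ∑ i ∈ t, ‖∑' j, f i j‖ ^ 2 ≤ C := by
  classical
  -- a row that is not summable has `∑' = 0` (junk value) and contributes nothing
  have hvanish : ∀ i ∈ t, i ∉ t.filter (fun i => Summable (f i)) → ‖∑' j, f i j‖ ^ 2 = 0 :=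
    fun i hi hi' => by
      rw [tsum_eq_zero_of_not_summable (by simpa [hi] using hi'), norm_zero, sq, mul_zero]
  rw [← Finset.sum_subset (t.filter_subset _) hvanish]
  exact le_of_tendsto' (tendsto_finsetSum _ fun i hi =>
    ((Finset.mem_filter.1 hi).2.hasSum.norm.pow 2)) fun s => h _ s

theorem IsPosDefKernel.sum_norm_sq_sum_smul_le {I H : Type*} [NormedAddCommGroup H]
    [InnerProductSpace ℂ H] {k : I → I → ℂ} (hk : IsPosDefKernel k)
    (hkdiag : ∀ i, ‖k i i‖ ≤ 1) {Tmat : I → I → H →L[ℂ] H}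
    {T : lp (fun _ : I => H) 2 →L[ℂ] lp (fun _ : I => H) 2}
    (hT : ∀ ξ i, (T ξ : ∀ _ : I, H) i = ∑' j, Tmat i j (ξ j))
    (ξ : lp (fun _ : I => H) 2) (t s : Finset I) :
    ∑ i ∈ t, ‖∑ j ∈ s, k i j • Tmat i j (ξ j)‖ ^ 2 ≤ (‖T‖ * ‖ξ‖) ^ 2 := by
  classical
  obtain ⟨m, x, hx⟩ := hk.exists_gram (t ∪ s)
  have hx_norm (i) (hi : i ∈ t ∪ s) : ‖x i‖ ≤ 1 := by
    refine (sq_le_one_iff₀ (norm_nonneg _)).1 ?_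
    rw [← inner_self_eq_norm_sq (𝕜 := ℂ), inner_self_re_eq_norm, ← hx i hi i hi]
    exact hkdiag i
  have hk_eq (i) (hi : i ∈ t) : ∑ j ∈ s, k i j • Tmat i j (ξ j) =
      ∑ j ∈ s, inner ℂ (x i) (x j) • Tmat i j (ξ j) :=
    Finset.sum_congr rfl fun j hj => by
      rw [hx i (Finset.mem_union_left _ hi) j (Finset.mem_union_right _ hj)]
  rw [Finset.sum_congr rfl fun i hi => by rw [hk_eq i hi]]
  exact sum_norm_sq_sum_inner_smul_le hT x x t s
    (fun i hi => hx_norm i (Finset.mem_union_left _ hi))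
    (fun j hj => hx_norm j (Finset.mem_union_right _ hj)) ξ

theorem schurMultiplier_norm_le_general {I H : Type*}
    [NormedAddCommGroup H] [InnerProductSpace ℂ H]
    (k : I → I → ℂ) (hk : IsPosDefKernel k) (hkdiag : ∀ i : I, ‖k i i‖ ≤ 1)
    (Tmat : I → I → H →L[ℂ] H)
    (T S : lp (fun _ : I => H) 2 →L[ℂ] lp (fun _ : I => H) 2)
    (hT : ∀ (ξ : lp (fun _ : I => H) 2) (i : I), (T ξ : ∀ _ : I, H) i = ∑' j : I, Tmat i j (ξ j))
    (hS : ∀ (ξ : lp (fun _ : I => H) 2) (i : I),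
      (S ξ : ∀ _ : I, H) i = ∑' j : I, k i j • Tmat i j (ξ j)) :
    ‖S‖ ≤ ‖T‖ := by
  refine S.opNorm_le_bound (norm_nonneg T) fun ξ =>
    lp.norm_le_of_forall_sum_norm_sq_le (by positivity) fun t => ?_
  simp only [hS]
  exact sum_norm_sq_tsum_le_of_forall_finset (hk.sum_norm_sq_sum_smul_le hkdiag hT ξ) t

/-- Let `k` be a positive definite kernel on a countable index set `I` with
`sup_i |k(i,i)| ≤ 1`, and let `T` be a bounded operator on `ℓ²(I) ⊗ H = ℓ²(I, H)` given
by a matrix `(T_{ij})` of operators on `H`.  Then the Schur multiplier `M_k(T) = S`, the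
operator with matrix entries `k(i,j) T_{ij}`, satisfies `‖M_k(T)‖ ≤ ‖T‖`. -/
theorem schurMultiplier_norm_le {I H : Type*} [Countable I]
    [NormedAddCommGroup H] [InnerProductSpace ℂ H] [CompleteSpace H]
    (k : I → I → ℂ) (hk : IsPosDefKernel k) (hkdiag : ∀ i : I, ‖k i i‖ ≤ 1)
    (Tmat : I → I → H →L[ℂ] H)
    (T S : lp (fun _ : I => H) 2 →L[ℂ] lp (fun _ : I => H) 2)
    (hT : ∀ (ξ : lp (fun _ : I => H) 2) (i : I), (T ξ : ∀ _ : I, H) i = ∑' j : I, Tmat i j (ξ j))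
    (hS : ∀ (ξ : lp (fun _ : I => H) 2) (i : I),
      (S ξ : ∀ _ : I, H) i = ∑' j : I, k i j • Tmat i j (ξ j)) :
    ‖S‖ ≤ ‖T‖ :=
  schurMultiplier_norm_le_general k hk hkdiag Tmat T S hT hS
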